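/- Let 1 < α < 2 and ρ > 0. Then the second derivative of the phase is ψ_R″(λ) = α·(λ² + ρ²)^{−(2−α/2)}·[(α−1)λ² + ρ²] (independent of R); it is strictly positive on ℝ, and there exist constants c, C > 0 depending only on α and ρ such that c·(1+|λ|)^{−(2−α)} ≤ ψ_R″(λ) ≤ C·(1+|λ|)^{−(2−α)} for all λ ∈ ℝ. Moreover ψ_R″ is an inhomogeneous symbol of order −(2−α): for every j ∈ ℕ there is a constant C_j ≥ 0, depending only on α, ρ and j, such that |(d/dλ)^j ψ_R″(λ)| ≤ C_j·(1+|λ|)^{−(2−α)−j} for all λ ∈ ℝ. -/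

import Mathlib

/-- The phase `ψ_R(λ) = (λ² + ρ²)^{α/2} − R·λ`. -/
noncomputable def psi (α ρ R lam : ℝ) : ℝ :=
  (lam ^ 2 + ρ ^ 2) ^ (α / 2) - R * lam

/-!
Write `ψ_R''(λ) = P(λ) (λ² + ρ²)^{-(2 - α/2)}` with `P(λ) = α(α - 1)λ² + αρ²`. Differentiating
`P(λ) (λ² + ρ²)^{-t}` gives `Q(λ) (λ² + ρ²)^{-(t + 1)}` with `deg Q ≤ deg P + 1`, and since
`λ² + ρ²` is comparable to `(1 + |λ|)²`, such a term is `O((1 + |λ|)^{deg P - 2t})`. This gives the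
symbol estimates, and for `j = 0` the upper bound. The lower bound comes from
`α(α - 1)(λ² + ρ²) ≤ P(λ)`, which holds because `α ≤ 2`.
-/

open Polynomial

lemma sq_add_sq_le_mul_one_add_abs_sq (ρ x : ℝ) :
    x ^ 2 + ρ ^ 2 ≤ (1 + ρ ^ 2) * (1 + |x|) ^ 2 := by
  nlinarith [abs_nonneg x, sq_abs x, sq_nonneg ρ, sq_nonneg (1 + |x|)]

lemma mul_one_add_abs_sq_le_sq_add_sq (ρ x : ℝ) :
    min 1 (ρ ^ 2) / 2 * (1 + |x|) ^ 2 ≤ x ^ 2 + ρ ^ 2 := by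
  have h1 : (1 + |x|) ^ 2 ≤ 2 + 2 * x ^ 2 := by
    nlinarith [sq_nonneg (1 - |x|), sq_abs x]
  have hm1 : min 1 (ρ ^ 2) ≤ 1 := min_le_left _ _
  have hm2 : min 1 (ρ ^ 2) ≤ ρ ^ 2 := min_le_right _ _
  have hm0 : 0 ≤ min 1 (ρ ^ 2) := le_min zero_le_one (sq_nonneg ρ)
  nlinarith [sq_nonneg x]

lemma one_add_abs_sq_rpow_neg (x t : ℝ) : ((1 + |x|) ^ 2) ^ (-t) = (1 + |x|) ^ (-(2 * t)) := by
  rw [← Real.rpow_natCast _ 2, ← Real.rpow_mul (by positivity)]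
  norm_num

section Weights

variable {ρ : ℝ}

lemma sq_add_sq_rpow_neg_le (hρ : ρ ≠ 0) {t : ℝ} (ht : 0 ≤ t) (x : ℝ) :
    (x ^ 2 + ρ ^ 2) ^ (-t) ≤ (min 1 (ρ ^ 2) / 2) ^ (-t) * (1 + |x|) ^ (-(2 * t)) := by
  have hm : 0 < min 1 (ρ ^ 2) / 2 := by positivity
  calc (x ^ 2 + ρ ^ 2) ^ (-t)
      ≤ (min 1 (ρ ^ 2) / 2 * (1 + |x|) ^ 2) ^ (-t) :=
        Real.rpow_le_rpow_of_nonpos (by positivity) (mul_one_add_abs_sq_le_sq_add_sq ρ x)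
          (by linarith)
    _ = (min 1 (ρ ^ 2) / 2) ^ (-t) * (1 + |x|) ^ (-(2 * t)) := by
        rw [Real.mul_rpow hm.le (by positivity), one_add_abs_sq_rpow_neg]

lemma le_sq_add_sq_rpow_neg (hρ : ρ ≠ 0) {t : ℝ} (ht : 0 ≤ t) (x : ℝ) :
    (1 + ρ ^ 2) ^ (-t) * (1 + |x|) ^ (-(2 * t)) ≤ (x ^ 2 + ρ ^ 2) ^ (-t) := by
  rw [← one_add_abs_sq_rpow_neg, ← Real.mul_rpow (by positivity) (by positivity)]
  exact Real.rpow_le_rpow_of_nonpos (by positivity) (sq_add_sq_le_mul_one_add_abs_sq ρ x)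
    (by linarith)

end Weights

lemma Polynomial.abs_eval_le_of_natDegree_le {P : ℝ[X]} {n : ℕ} (hn : P.natDegree ≤ n) :
    ∃ C, 0 ≤ C ∧ ∀ x : ℝ, |P.eval x| ≤ C * (1 + |x|) ^ n := by
  refine ⟨∑ i ∈ Finset.range (P.natDegree + 1), |P.coeff i|,
    Finset.sum_nonneg fun _ _ => abs_nonneg _, fun x => ?_⟩
  rw [eval_eq_sum_range, Finset.sum_mul]
  refine (Finset.abs_sum_le_sum_abs _ _).trans (Finset.sum_le_sum fun i hi => ?_)
  rw [abs_mul, abs_pow]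
  refine mul_le_mul_of_nonneg_left ?_ (abs_nonneg _)
  calc |x| ^ i ≤ (1 + |x|) ^ i := pow_le_pow_left₀ (abs_nonneg x) (by linarith) i
    _ ≤ (1 + |x|) ^ n := pow_le_pow_right₀ (by simp)
        (by have := Finset.mem_range.mp hi; omega)

lemma Polynomial.natDegree_derivative_mul_sub_le (Q : ℝ[X]) (a c : ℝ) :
    (derivative Q * (X ^ 2 + C c) - C a * X * Q).natDegree ≤ Q.natDegree + 1 := by
  refine (natDegree_sub_le _ _).trans (max_le ?_ ?_)
  · rcases Nat.eq_zero_or_pos Q.natDegree with h0 | hpos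
    · simp [derivative_of_natDegree_zero h0]
    · refine (natDegree_mul_le_of_le (natDegree_derivative_le Q) natDegree_X_pow_add_C.le).trans ?_
      omega
  · exact (natDegree_mul_le_of_le ((natDegree_C_mul_le a X).trans natDegree_X_le) le_rfl).trans
      (by omega)

noncomputable def polyRpow (ρ t : ℝ) (P : ℝ[X]) (x : ℝ) : ℝ :=
  P.eval x * (x ^ 2 + ρ ^ 2) ^ (-t)

section PolyRpow

variable {ρ : ℝ}

lemma hasDerivAt_polyRpow (hρ : ρ ≠ 0) (t : ℝ) (P : ℝ[X]) (x : ℝ) :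
    HasDerivAt (polyRpow ρ t P)
      (polyRpow ρ (t + 1) (derivative P * (X ^ 2 + C (ρ ^ 2)) - C (2 * t) * X * P) x) x := by
  have hu : 0 < x ^ 2 + ρ ^ 2 := by positivity
  have hsq : HasDerivAt (fun y : ℝ => y ^ 2 + ρ ^ 2) (2 * x) x := by
    simpa using (hasDerivAt_pow 2 x).add_const (ρ ^ 2)
  refine ((P.hasDerivAt x).mul (hsq.rpow_const (p := -t) (Or.inl hu.ne'))).congr_deriv ?_
  have hsplit : (x ^ 2 + ρ ^ 2) ^ (-t) = (x ^ 2 + ρ ^ 2) * (x ^ 2 + ρ ^ 2) ^ (-(t + 1)) := by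
    rw [show -t = 1 + -(t + 1) by ring, Real.rpow_add hu, Real.rpow_one]
  rw [polyRpow, show -t - 1 = -(t + 1) by ring, hsplit]
  simp only [eval_sub, eval_mul, eval_add, eval_pow, eval_C, eval_X]
  ring

lemma iteratedDeriv_polyRpow (hρ : ρ ≠ 0) (t : ℝ) (P : ℝ[X]) (j : ℕ) :
    ∃ Q : ℝ[X], Q.natDegree ≤ P.natDegree + j ∧
      iteratedDeriv j (polyRpow ρ t P) = polyRpow ρ (t + j) Q := by
  induction j with
  | zero => exact ⟨P, le_rfl, by simp⟩
  | succ j ih =>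
    obtain ⟨Q, hdeg, hQ⟩ := ih
    refine ⟨derivative Q * (X ^ 2 + C (ρ ^ 2)) - C (2 * (t + j)) * X * Q, ?_, ?_⟩
    · exact (natDegree_derivative_mul_sub_le Q _ _).trans (by omega)
    · rw [iteratedDeriv_succ, hQ]
      funext x
      rw [(hasDerivAt_polyRpow hρ _ Q x).deriv]
      push_cast
      ring_nf

lemma abs_polyRpow_le (hρ : ρ ≠ 0) {t : ℝ} (ht : 0 ≤ t) {P : ℝ[X]} {n : ℕ}
    (hn : P.natDegree ≤ n) :
    ∃ C, 0 ≤ C ∧ ∀ x, |polyRpow ρ t P x| ≤ C * (1 + |x|) ^ ((n : ℝ) - 2 * t) := by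
  obtain ⟨C, hC, hP⟩ := abs_eval_le_of_natDegree_le hn
  set K := (min 1 (ρ ^ 2) / 2) ^ (-t)
  refine ⟨C * K, by positivity, fun x => ?_⟩
  have hu : 0 < (x ^ 2 + ρ ^ 2) ^ (-t) := by positivity
  calc |polyRpow ρ t P x| = |P.eval x| * (x ^ 2 + ρ ^ 2) ^ (-t) := by
        rw [polyRpow, abs_mul, abs_of_pos hu]
    _ ≤ C * (1 + |x|) ^ n * (K * (1 + |x|) ^ (-(2 * t))) :=
        mul_le_mul (hP x) (sq_add_sq_rpow_neg_le hρ ht x) hu.le (by positivity)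
    _ = C * K * (1 + |x|) ^ ((n : ℝ) - 2 * t) := by
        rw [sub_eq_add_neg, Real.rpow_add (by positivity), Real.rpow_natCast]
        ring

end PolyRpow

section Phase

variable {α ρ : ℝ}

lemma hasDerivAt_psi (hρ : ρ ≠ 0) (R x : ℝ) :
    HasDerivAt (psi α ρ R) (polyRpow ρ (1 - α / 2) (C α * X) x - R) x := by
  have hpsi : psi α ρ R = polyRpow ρ (-(α / 2)) 1 - fun y => R * id y := by
    funext y
    simp [psi, polyRpow]
  rw [hpsi]
  refine ((hasDerivAt_polyRpow hρ _ 1 x).sub ((hasDerivAt_id x).const_mul R)).congr_deriv ?_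
  simp only [polyRpow, derivative_one, zero_mul, zero_sub, mul_one, eval_neg, eval_mul, eval_C,
    eval_X]
  ring_nf

lemma iteratedDeriv_two_psi (hρ : ρ ≠ 0) (R : ℝ) :
    iteratedDeriv 2 (psi α ρ R)
      = polyRpow ρ (2 - α / 2) (C (α * (α - 1)) * X ^ 2 + C (α * ρ ^ 2)) := by
  have hderiv : deriv (psi α ρ R) = fun x => polyRpow ρ (1 - α / 2) (C α * X) x - R :=
    funext fun x => (hasDerivAt_psi hρ R x).deriv
  rw [iteratedDeriv_succ, iteratedDeriv_one, hderiv]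
  funext x
  rw [((hasDerivAt_polyRpow hρ _ _ x).sub_const R).deriv]
  simp only [polyRpow, eval_sub, eval_mul, eval_add, eval_pow, eval_C, eval_X, eval_zero, eval_one,
    derivative_mul, derivative_C, derivative_X]
  ring_nf

lemma le_iteratedDeriv_two_psi (hα1 : 1 ≤ α) (hα2 : α ≤ 2) (hρ : ρ ≠ 0) (R x : ℝ) :
    α * (α - 1) * (1 + ρ ^ 2) ^ (-(1 - α / 2)) * (1 + |x|) ^ (-(2 - α))
      ≤ iteratedDeriv 2 (psi α ρ R) x := by
  have hu : 0 < x ^ 2 + ρ ^ 2 := by positivity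
  have hαα : 0 ≤ α * (α - 1) := mul_nonneg (by linarith) (by linarith)
  have hw := le_sq_add_sq_rpow_neg hρ (t := 1 - α / 2) (by linarith) x
  rw [show 2 * (1 - α / 2) = 2 - α by ring] at hw
  rw [iteratedDeriv_two_psi hρ, polyRpow]
  calc α * (α - 1) * (1 + ρ ^ 2) ^ (-(1 - α / 2)) * (1 + |x|) ^ (-(2 - α))
      ≤ α * (α - 1) * (x ^ 2 + ρ ^ 2) ^ (-(1 - α / 2)) := by
        rw [mul_assoc]; exact mul_le_mul_of_nonneg_left hw hαα
    _ = α * (α - 1) * (x ^ 2 + ρ ^ 2) * (x ^ 2 + ρ ^ 2) ^ (-(2 - α / 2)) := by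
        rw [show -(1 - α / 2) = 1 + -(2 - α / 2) by ring, Real.rpow_add hu, Real.rpow_one]
        ring
    _ ≤ _ := by
        gcongr
        simp only [eval_add, eval_mul, eval_pow, eval_C, eval_X]
        nlinarith [mul_nonneg (mul_nonneg (by linarith : 0 ≤ α) (by linarith : 0 ≤ 2 - α))
          (sq_nonneg ρ)]

lemma iteratedDeriv_two_psi_apply (hρ : ρ ≠ 0) (R x : ℝ) :
    iteratedDeriv 2 (psi α ρ R) x
      = α * (x ^ 2 + ρ ^ 2) ^ (-(2 - α / 2)) * ((α - 1) * x ^ 2 + ρ ^ 2) := by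
  rw [iteratedDeriv_two_psi hρ, polyRpow]
  simp only [eval_add, eval_mul, eval_pow, eval_C, eval_X]
  ring

lemma abs_iteratedDeriv_iteratedDeriv_two_psi_le (hα : α ≤ 4) (hρ : ρ ≠ 0) (j : ℕ) :
    ∃ C, 0 ≤ C ∧ ∀ R x : ℝ,
      |iteratedDeriv j (iteratedDeriv 2 (psi α ρ R)) x|
        ≤ C * (1 + |x|) ^ (-(2 - α) - (j : ℝ)) := by
  obtain ⟨Q, hQ, hderivs⟩ := iteratedDeriv_polyRpow hρ (2 - α / 2)
    (C (α * (α - 1)) * X ^ 2 + C (α * ρ ^ 2)) j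
  obtain ⟨C, hC, hbound⟩ := abs_polyRpow_le hρ (t := 2 - α / 2 + j)
    (by linarith [(j.cast_nonneg : (0 : ℝ) ≤ j)]) (n := 2 + j)
    (hQ.trans (by gcongr; compute_degree))
  refine ⟨C, hC, fun R x => ?_⟩
  rw [iteratedDeriv_two_psi hρ, hderivs]
  convert hbound x using 3
  push_cast
  ring

end Phase

theorem stmt1 (α ρ : ℝ) (hα1 : 1 < α) (hα2 : α < 2) (hρ : 0 < ρ) :
    (∀ R lam : ℝ, iteratedDeriv 2 (psi α ρ R) lam
      = α * (lam ^ 2 + ρ ^ 2) ^ (-(2 - α / 2)) * ((α - 1) * lam ^ 2 + ρ ^ 2)) ∧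
    (∀ R lam : ℝ, 0 < iteratedDeriv 2 (psi α ρ R) lam) ∧
    (∃ c C : ℝ, 0 < c ∧ 0 < C ∧ ∀ R lam : ℝ,
      c * (1 + |lam|) ^ (-(2 - α)) ≤ iteratedDeriv 2 (psi α ρ R) lam ∧
      iteratedDeriv 2 (psi α ρ R) lam ≤ C * (1 + |lam|) ^ (-(2 - α))) ∧
    (∀ j : ℕ, ∃ Cj : ℝ, 0 ≤ Cj ∧ ∀ R lam : ℝ,
      |iteratedDeriv j (iteratedDeriv 2 (psi α ρ R)) lam|
        ≤ Cj * (1 + |lam|) ^ (-(2 - α) - (j : ℝ))) := by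
  have hsymbol := abs_iteratedDeriv_iteratedDeriv_two_psi_le (α := α) (by linarith) hρ.ne'
  obtain ⟨C, hC, hupper⟩ := hsymbol 0
  have hc : 0 < α * (α - 1) * (1 + ρ ^ 2) ^ (-(1 - α / 2)) := by
    have : 0 < α - 1 := by linarith
    positivity
  have hbounds : ∀ R lam : ℝ,
      α * (α - 1) * (1 + ρ ^ 2) ^ (-(1 - α / 2)) * (1 + |lam|) ^ (-(2 - α))
        ≤ iteratedDeriv 2 (psi α ρ R) lam ∧
      iteratedDeriv 2 (psi α ρ R) lam ≤ (C + 1) * (1 + |lam|) ^ (-(2 - α)) := fun R lam => by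
    refine ⟨le_iteratedDeriv_two_psi hα1.le hα2.le hρ.ne' R lam, ?_⟩
    have h := hupper R lam
    simp only [iteratedDeriv_zero, CharP.cast_eq_zero, sub_zero] at h
    calc _ ≤ _ := le_abs_self _
      _ ≤ C * (1 + |lam|) ^ (-(2 - α)) := h
      _ ≤ (C + 1) * (1 + |lam|) ^ (-(2 - α)) := by gcongr; linarith
  exact ⟨iteratedDeriv_two_psi_apply hρ.ne',
    fun R lam => (mul_pos hc (by positivity)).trans_le (hbounds R lam).1,
    ⟨_, C + 1, hc, by linarith, hbounds⟩, hsymbol⟩
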